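/- arXiv:math/0610789 — 3 statements merged into one kernel-verified Lean document; each statement's English description precedes it below -/
import Mathlib

section
/- For all integers n ≥ 1, m ≥ 1, k ≥ 1, the following combinatorial identity holds: m·C(n+k(n+m-1), n) − (n+m−1)·C(n+k(n+m−2), n) + Σ_{j=1}^{n−1} (−1)^{j−1}·C(j+m−2, m−1)·C(n+m−1, j+m)·C((k+1)n − k(1+j), n) = C(n+m−1, n)·k^n. -/
open Finset Polynomial fwdDiff

lemma fwdDiff_poly_eval : ∀ (e : ℕ) (G : ℚ[X]), G.natDegree ≤ e →
    (fwdDiff (1:ℚ))^[e] (fun x => G.eval x) = fun _ => (e.factorial : ℚ) * G.coeff e := by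
  intro e
  induction e with
  | zero =>
      intro G hG
      funext x
      simp only [Function.iterate_zero, id]
      rw [Polynomial.eval_eq_sum_range' (lt_of_le_of_lt hG zero_lt_one)]
      simp
  | succ d ih =>
      intro G hG
      have hstep : fwdDiff (1:ℚ) (fun x => G.eval x)
          = fun x => (Polynomial.taylor 1 G - G).eval x := by
        funext x
        simp [fwdDiff, Polynomial.taylor_eval]
      set H := Polynomial.taylor (1:ℚ) G - G with hH
      have hcoeffs : ∀ c, d < c → H.coeff c = 0 := by
        intro c hc
        rcases Nat.lt_or_ge (d+1) c with h | h
        · have h1 : (Polynomial.taylor (1:ℚ) G).natDegree < c := by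
            rw [Polynomial.natDegree_taylor]; omega
          simp [hH, Polynomial.coeff_sub, Polynomial.coeff_eq_zero_of_natDegree_lt h1,
            Polynomial.coeff_eq_zero_of_natDegree_lt (show G.natDegree < c by omega)]
        · have hc' : c = d + 1 := by omega
          subst hc'
          rw [hH, Polynomial.coeff_sub, Polynomial.taylor_coeff]
          have hdeg : (Polynomial.hasseDeriv (d+1) G).natDegree < 1 := by
            have := Polynomial.natDegree_hasseDeriv_le G (d+1); omega
          rw [Polynomial.eval_eq_sum_range' hdeg]
          simp [Polynomial.hasseDeriv_coeff]
      have hdegH : H.natDegree ≤ d := Polynomial.natDegree_le_iff_coeff_eq_zero.2 hcoeffs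
      have hcoeffd : H.coeff d = (d+1) * G.coeff (d+1) := by
        rw [hH, Polynomial.coeff_sub, Polynomial.taylor_coeff]
        have hdeg : (Polynomial.hasseDeriv d G).natDegree < 2 := by
          have := Polynomial.natDegree_hasseDeriv_le G d; omega
        rw [Polynomial.eval_eq_sum_range' hdeg, Finset.sum_range_succ, Finset.sum_range_one]
        simp [Polynomial.hasseDeriv_coeff, Nat.add_comm 1 d, Nat.choose_succ_self_right]
        skip
      rw [Function.iterate_succ_apply, hstep, ih H hdegH, hcoeffd]
      funext x
      push_cast [Nat.factorial_succ]
      ring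

lemma alt_sum_poly (d : ℕ) (F : ℚ[X]) (hF : F.natDegree ≤ d)
    (hdiff : (fwdDiff (1:ℚ))^[d] (fun x => F.eval x) = fun _ => (d.factorial : ℚ) * F.coeff d) :
    ∑ t ∈ Finset.range (d+1), (-1:ℚ)^t * (d.choose t) * F.eval (t:ℚ)
      = (-1)^d * d.factorial * F.coeff d := by
  have h := fwdDiff_iter_eq_sum_shift (1:ℚ) (fun x => F.eval x) d 0
  rw [hdiff] at h
  simp only [zsmul_eq_mul, nsmul_eq_mul, mul_one, zero_add, Int.cast_mul, Int.cast_pow,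
    Int.cast_neg, Int.cast_one, Int.cast_natCast] at h
  calc ∑ t ∈ Finset.range (d+1), (-1:ℚ)^t * (d.choose t) * F.eval (t:ℚ)
      = ∑ t ∈ Finset.range (d+1), (-1:ℚ)^d * ((-1)^(d-t) * (d.choose t) * F.eval (t:ℚ)) := by
        refine Finset.sum_congr rfl fun t ht => ?_
        have ht' : t ≤ d := by simpa [Nat.lt_succ_iff] using ht
        have hsign : (-1:ℚ)^d * (-1)^(d-t) = (-1)^t := by
          rw [← pow_add, show d + (d - t) = 2*(d-t) + t by omega, pow_add, pow_mul]
          norm_num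
        rw [← hsign]; ring
    _ = (-1:ℚ)^d * ∑ t ∈ Finset.range (d+1), (-1:ℚ)^(d-t) * (d.choose t) * F.eval (t:ℚ) := by
        rw [Finset.mul_sum]
    _ = (-1)^d * ((d.factorial : ℚ) * F.coeff d) := by rw [← h]
    _ = (-1)^d * d.factorial * F.coeff d := by ring

lemma asc_prod (a : ℕ) : ∀ n, (∏ i ∈ Finset.range n, (a + i + 1)) = (a+1).ascFactorial n
  | 0 => by simp
  | n+1 => by rw [Finset.prod_range_succ, asc_prod a n, Nat.ascFactorial_succ]; ring

lemma prod_asc_q (a n : ℕ) :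
    (∏ i ∈ Finset.range n, ((a:ℚ) + i + 1)) = ((n.factorial * (n + a).choose n : ℕ) : ℚ) := by
  have h1 : (∏ i ∈ Finset.range n, ((a:ℚ) + i + 1))
      = (((a+1).ascFactorial n : ℕ) : ℚ) := by
    rw [← asc_prod a n]
    push_cast
    rfl
  rw [h1, Nat.ascFactorial_eq_factorial_mul_choose, Nat.add_comm a n]

lemma prod_desc_q (b K : ℕ) :
    (∏ i ∈ Finset.range K, ((b:ℚ) - i)) = (b.descFactorial K : ℚ) := by
  rcases Nat.lt_or_ge b K with h | h
  · rw [Finset.prod_eq_zero (Finset.mem_range.2 h) (by simp), eq_comm]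
    rw [Nat.descFactorial_eq_zero_iff_lt.2 h]; simp
  · rw [Nat.descFactorial_eq_prod_range]
    push_cast
    refine Finset.prod_congr rfl fun i hi => ?_
    rw [Nat.cast_sub (le_trans (Nat.le_of_lt_succ (Nat.lt_succ_of_lt (Finset.mem_range.1 hi))) h)]

lemma prod_two_fac : ∀ K : ℕ, (∏ i ∈ Finset.range K, (i + 2)) = (K+1).factorial
  | 0 => by simp
  | K+1 => by rw [Finset.prod_range_succ, prod_two_fac K, Nat.factorial_succ (K+1)]; ring


/-- Combinatorial identity for the Cartan integer of a generalized complete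
intersection (Lemma in §6). -/
theorem stmt_0 (n m k : ℕ) (hn : 1 ≤ n) (hm : 1 ≤ m) (hk : 1 ≤ k) :
    (m : ℤ) * (Nat.choose (n + k * (n + m - 1)) n : ℤ)
      - ((n + m - 1 : ℕ) : ℤ) * (Nat.choose (n + k * (n + m - 2)) n : ℤ)
      + ∑ j ∈ Finset.Icc 1 (n - 1),
          (-1 : ℤ) ^ (j - 1) * (Nat.choose (j + m - 2) (m - 1) : ℤ)
            * (Nat.choose (n + m - 1) (j + m) : ℤ)
            * (Nat.choose ((k + 1) * n - k * (1 + j)) n : ℤ)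
      = (Nat.choose (n + m - 1) n : ℤ) * (k : ℤ) ^ n := by
  have hkQ : (-(k:ℚ)) ≠ 0 := by
    simp only [ne_eq, neg_eq_zero, Nat.cast_eq_zero]; omega
  set N := n + m - 1 with hN
  have hnN : n ≤ N := by omega
  have hN1 : 1 ≤ N := by omega
  set P1 : ℚ[X] := ∏ i ∈ Finset.range (m-1), (X - C ((i:ℚ)+2)) with hP1
  set P2 : ℚ[X] := ∏ i ∈ Finset.range n,
      (C (-(k:ℚ)) * X + C ((k:ℚ)*(N:ℚ) + i + 1)) with hP2
  have hP1ne : P1 ≠ 0 := Finset.prod_ne_zero_iff.2 fun i _ => Polynomial.X_sub_C_ne_zero _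
  have hlin : ∀ i : ℕ, (C (-(k:ℚ)) * X + C ((k:ℚ)*(N:ℚ) + i + 1)) ≠ 0 := by
    intro i hzero
    have h := Polynomial.natDegree_linear (b := (k:ℚ)*(N:ℚ) + i + 1) hkQ
    rw [hzero] at h
    simp at h
  have hP2ne : P2 ≠ 0 := Finset.prod_ne_zero_iff.2 fun i _ => hlin i
  set F : ℚ[X] := P1 * P2 with hF
  have hdeg1 : P1.natDegree = m - 1 := by
    rw [hP1, Polynomial.natDegree_prod _ _ (fun i _ => Polynomial.X_sub_C_ne_zero _)]
    simp only [Polynomial.natDegree_X_sub_C]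
    simp
  have hdeg2 : P2.natDegree = n := by
    rw [hP2, Polynomial.natDegree_prod _ _ (fun i _ => hlin i)]
    simp only [Polynomial.natDegree_linear hkQ]
    simp
  have hdegF : F.natDegree = N := by
    rw [hF, Polynomial.natDegree_mul hP1ne hP2ne, hdeg1, hdeg2]; omega
  have hcoeffF : F.coeff N = (-(k:ℚ))^n := by
    have h1 : F.coeff N = F.leadingCoeff := by rw [Polynomial.leadingCoeff, hdegF]
    rw [h1, hF, Polynomial.leadingCoeff_mul, hP1, hP2,
      Polynomial.leadingCoeff_prod, Polynomial.leadingCoeff_prod]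
    simp only [Polynomial.leadingCoeff_X_sub_C, Polynomial.leadingCoeff_linear hkQ]
    simp
  have heval : ∀ t : ℕ, t ≤ N → F.eval (t:ℚ)
      = (∏ i ∈ Finset.range (m-1), ((t:ℚ) - ((i:ℚ)+2)))
        * ((n.factorial * ((n + k*(N-t)).choose n) : ℕ) : ℚ) := by
    intro t ht
    rw [hF, Polynomial.eval_mul, hP1, hP2, Polynomial.eval_prod, Polynomial.eval_prod]
    congr 1
    · exact Finset.prod_congr rfl fun i _ => by simp
    · have h2 : ∀ i ∈ Finset.range n,
          Polynomial.eval (t:ℚ) (C (-(k:ℚ)) * X + C ((k:ℚ)*(N:ℚ) + i + 1))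
            = ((k*(N-t) : ℕ) : ℚ) + i + 1 := by
        intro i _
        have hc : ((k*(N-t) : ℕ) : ℚ) = (k:ℚ)*(N:ℚ) - (k:ℚ)*(t:ℚ) := by
          push_cast [Nat.cast_sub ht]; ring
        simp only [Polynomial.eval_add, Polynomial.eval_mul, Polynomial.eval_C,
          Polynomial.eval_X, hc]
        ring
      rw [Finset.prod_congr rfl h2, prod_asc_q]
  have hg2 : ∀ t : ℕ, 2 ≤ t → (∏ i ∈ Finset.range (m-1), ((t:ℚ) - ((i:ℚ)+2)))
      = (((m-1).factorial * (t-2).choose (m-1) : ℕ) : ℚ) := by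
    intro t ht
    have h1 : ∀ i ∈ Finset.range (m-1), (t:ℚ) - ((i:ℚ)+2) = (((t-2:ℕ)):ℚ) - i := by
      intro i _
      push_cast [Nat.cast_sub ht]
      ring
    rw [Finset.prod_congr rfl h1, prod_desc_q, Nat.descFactorial_eq_factorial_mul_choose]
  have hg0 : (∏ i ∈ Finset.range (m-1), ((0:ℚ) - ((i:ℚ)+2)))
      = (-1)^(m-1) * (m.factorial : ℚ) := by
    have h1 : ∀ i ∈ Finset.range (m-1), ((0:ℚ) - ((i:ℚ)+2)) = (-1) * ((i:ℚ)+2) :=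
      fun i _ => by ring
    rw [Finset.prod_congr rfl h1, Finset.prod_mul_distrib, Finset.prod_const, Finset.card_range]
    congr 1
    have h2 : (∏ i ∈ Finset.range (m-1), ((i:ℚ)+2))
        = ((∏ i ∈ Finset.range (m-1), (i+2) : ℕ) : ℚ) := by push_cast; rfl
    rw [h2, prod_two_fac, show m - 1 + 1 = m by omega]
  have hg1 : (∏ i ∈ Finset.range (m-1), ((1:ℚ) - ((i:ℚ)+2)))
      = (-1)^(m-1) * ((m-1).factorial : ℚ) := by
    have h1 : ∀ i ∈ Finset.range (m-1), ((1:ℚ) - ((i:ℚ)+2)) = (-1) * ((i:ℚ)+1) :=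
      fun i _ => by ring
    rw [Finset.prod_congr rfl h1, Finset.prod_mul_distrib, Finset.prod_const, Finset.card_range]
    congr 1
    have h2 : (∏ i ∈ Finset.range (m-1), ((i:ℚ)+1))
        = ((∏ i ∈ Finset.range (m-1), (i+1) : ℕ) : ℚ) := by push_cast; rfl
    rw [h2, Finset.prod_range_add_one_eq_factorial]
  -- value of the alternating sum via forward differences
  have hS : ∑ t ∈ Finset.range (N+1), (-1:ℚ)^t * (N.choose t) * F.eval (t:ℚ)
      = (-1)^N * N.factorial * (-(k:ℚ))^n := by
    rw [alt_sum_poly N F hdegF.le (fwdDiff_poly_eval N F hdegF.le), hcoeffF]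
  -- split the sum
  have hsplit : ∑ t ∈ Finset.range (N+1), (-1:ℚ)^t * (N.choose t) * F.eval (t:ℚ)
      = F.eval ((0:ℕ):ℚ) - (N:ℚ) * F.eval ((1:ℕ):ℚ)
        + ∑ t ∈ Finset.Ico 2 (N+1), (-1:ℚ)^t * (N.choose t) * F.eval (t:ℚ) := by
    rw [Finset.range_eq_Ico, Finset.sum_eq_sum_Ico_succ_bot (by omega : 0 < N+1),
      Finset.sum_eq_sum_Ico_succ_bot (by omega : 1 < N+1)]
    push_cast [Nat.choose_one_right, Nat.choose_zero_right]
    ring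
  have hzero : ∀ t ∈ Finset.Ico 2 (N+1), t ∉ Finset.Ico (m+1) (N+1) →
      (-1:ℚ)^t * (N.choose t) * F.eval (t:ℚ) = 0 := by
    intro t ht ht'
    simp only [Finset.mem_Ico, not_and, not_lt] at ht ht'
    have h2 : 2 ≤ t := ht.1
    have htm : t ≤ m := by
      by_contra h
      exact absurd (ht' (by omega)) (by omega)
    rw [heval t (by omega), hg2 t h2, Nat.choose_eq_zero_of_lt (show t-2 < m-1 by omega)]
    simp
  have hsub : ∑ t ∈ Finset.Ico 2 (N+1), (-1:ℚ)^t * (N.choose t) * F.eval (t:ℚ)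
      = ∑ t ∈ Finset.Ico (m+1) (N+1), (-1:ℚ)^t * (N.choose t) * F.eval (t:ℚ) :=
    (Finset.sum_subset (Finset.Ico_subset_Ico (by omega) le_rfl) hzero).symm
  -- main computation
  have hmfac : (m.factorial : ℚ) = m * (m-1).factorial := by
    have h : m.factorial = m * (m-1).factorial := by
      conv_lhs => rw [show m = (m-1)+1 by omega]
      rw [Nat.factorial_succ]
      congr 1
      omega
    exact_mod_cast h
  have key : ((-1:ℚ)^(m-1) * (m-1).factorial * n.factorial) *
      ((m:ℚ) * ((n + k*N).choose n : ℕ)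
        - (N : ℚ) * ((n + k*(n+m-2)).choose n : ℕ)
        + ∑ j ∈ Finset.Icc 1 (n-1),
            (-1:ℚ)^(j-1) * ((j+m-2).choose (m-1) : ℕ)
              * ((N.choose (j+m) : ℕ) : ℚ) * ((((k+1)*n - k*(1+j)).choose n : ℕ) : ℚ))
      = (-1:ℚ)^N * N.factorial * (-(k:ℚ))^n := by
    rw [← hS, hsplit, hsub]
    have e0 : F.eval ((0:ℕ):ℚ)
        = ((-1:ℚ)^(m-1) * (m-1).factorial * n.factorial) * ((m:ℚ) * ((n + k*N).choose n : ℕ)) := by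
      rw [heval 0 (by omega)]
      rw [show ((0:ℕ):ℚ) = (0:ℚ) by norm_cast] at *
      rw [hg0, show N - 0 = N by omega, hmfac]
      push_cast
      ring
    have e1 : (N:ℚ) * F.eval ((1:ℕ):ℚ)
        = ((-1:ℚ)^(m-1) * (m-1).factorial * n.factorial)
            * ((N : ℚ) * ((n + k*(n+m-2)).choose n : ℕ)) := by
      rw [heval 1 (by omega)]
      rw [show ((1:ℕ):ℚ) = (1:ℚ) by norm_cast] at *
      rw [hg1, show N - 1 = n+m-2 by omega]
      push_cast
      ring
    have eS : ∑ t ∈ Finset.Ico (m+1) (N+1), (-1:ℚ)^t * (N.choose t) * F.eval (t:ℚ)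
        = ((-1:ℚ)^(m-1) * (m-1).factorial * n.factorial) *
            ∑ j ∈ Finset.Icc 1 (n-1),
              (-1:ℚ)^(j-1) * ((j+m-2).choose (m-1) : ℕ)
                * ((N.choose (j+m) : ℕ) : ℚ) * ((((k+1)*n - k*(1+j)).choose n : ℕ) : ℚ) := by
      have hIcc : Finset.Icc 1 (n-1) = Finset.Ico 1 n := by
        rw [← Finset.Ico_add_one_right_eq_Icc]
        congr 1
        omega
      rw [hIcc, Finset.mul_sum, Finset.sum_Ico_eq_sum_range, Finset.sum_Ico_eq_sum_range,
        show N + 1 - (m+1) = n - 1 by omega, show n - 1 = n - 1 by rfl]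
      refine Finset.sum_congr rfl fun i hi => ?_
      have hi' : i < n - 1 := Finset.mem_range.1 hi
      have ht : m + 1 + i ≤ N := by omega
      rw [heval (m+1+i) ht, hg2 (m+1+i) (by omega)]
      obtain ⟨a, ha⟩ : ∃ a, n = i + 2 + a := ⟨n - (i+2), by omega⟩
      have harg : n + k * (N - (m+1+i)) = (k+1)*n - k*(1+(1+i)) := by
        have hNa : N - (m+1+i) = a := by omega
        rw [hNa]
        exact (Nat.sub_eq_of_eq_add (by rw [ha]; ring)).symm
      rw [harg]
      have hidx1 : 1 + i + m = m + 1 + i := by omega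
      have hidx3 : 1 + i - 1 = i := by omega
      rw [hidx1, hidx3]
      have hsign : (-1:ℚ)^(m+1+i) = (-1)^(m-1) * (-1)^i := by
        rw [show m+1+i = (m-1) + i + 2 by omega, pow_add, pow_add]
        ring_nf
      rw [hsign]
      push_cast
      ring
    rw [e0, e1] at *
    rw [eS]
    ring
  -- finish
  have hcz : ((-1:ℚ)^(m-1) * (m-1).factorial * n.factorial) ≠ 0 := by
    apply mul_ne_zero (mul_ne_zero _ _) _
    · exact pow_ne_zero _ (by norm_num)
    · exact_mod_cast (m-1).factorial_ne_zero
    · exact_mod_cast n.factorial_ne_zero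
  have hfac : (N.factorial : ℚ) = (N.choose n : ℚ) * n.factorial * (m-1).factorial := by
    have h := Nat.choose_mul_factorial_mul_factorial hnN
    rw [show N - n = m - 1 by omega] at h
    exact_mod_cast h.symm
  have hsgn : (-1:ℚ)^N * (-1)^n = (-1)^(m-1) := by
    rw [← pow_add, show N + n = 2*n + (m-1) by omega, pow_add, pow_mul]
    norm_num
  have hrhs : (-1:ℚ)^N * N.factorial * (-(k:ℚ))^n
      = ((-1:ℚ)^(m-1) * (m-1).factorial * n.factorial) * ((N.choose n : ℚ) * (k:ℚ)^n) := by
    rw [neg_pow, hfac, ← hsgn]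
    ring
  rw [hrhs] at key
  have hQ := mul_left_cancel₀ hcz key
  exact_mod_cast hQ
end

section
/- For every n ≥ 4, the quantity s_4^n = ((n−4)!/n!)·S_4(1,…,n) equals (n+1)(15n^3 + 15n^2 − 10n − 8)/5760. -/
open Finset

lemma aux_step (a : ℕ) (s : Finset ℕ) (ha : a ∉ s) (k : ℕ) :
    ∑ A ∈ (insert a s).powersetCard (k + 1), ∏ x ∈ A, (x : ℚ)
      = (∑ A ∈ s.powersetCard (k + 1), ∏ x ∈ A, (x : ℚ))
        + a * ∑ A ∈ s.powersetCard k, ∏ x ∈ A, (x : ℚ) := by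
  rw [Finset.powersetCard_succ_insert ha, Finset.sum_union, Finset.sum_image]
  · congr 1
    rw [Finset.mul_sum]
    refine Finset.sum_congr rfl fun A hA => ?_
    have hAs : A ⊆ s := Finset.mem_powersetCard.mp hA |>.1
    rw [Finset.prod_insert (fun h => ha (hAs h))]
  · intro A hA B hB hAB
    have hAs : A ⊆ s := Finset.mem_powersetCard.mp hA |>.1
    have hBs : B ⊆ s := Finset.mem_powersetCard.mp hB |>.1
    have h1 : a ∉ A := fun h => ha (hAs h)
    have h2 : a ∉ B := fun h => ha (hBs h)
    rw [← Finset.erase_insert h1, ← Finset.erase_insert h2, hAB]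
  · rw [Finset.disjoint_left]
    intro A hA hA'
    obtain ⟨B, hB, rfl⟩ := Finset.mem_image.mp hA'
    have hAs : insert a B ⊆ s := Finset.mem_powersetCard.mp hA |>.1
    exact ha (hAs (Finset.mem_insert_self a B))

lemma icc_succ (n : ℕ) : Finset.Icc 1 (n + 1) = insert (n + 1) (Finset.Icc 1 n) := by
  ext x; simp [Finset.mem_Icc]; omega

lemma e1 (n : ℕ) : ∑ A ∈ (Finset.Icc 1 n).powersetCard 1, ∏ x ∈ A, (x : ℚ)
    = n * (n + 1) / 2 := by
  induction n with
  | zero => rw [Finset.powersetCard_eq_empty.mpr (by simp)]; simp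
  | succ n ih =>
    rw [icc_succ, aux_step _ _ (by simp), ih]
    simp only [Finset.powersetCard_zero, Finset.sum_singleton, Finset.prod_empty]
    push_cast
    ring

lemma e2 (n : ℕ) : ∑ A ∈ (Finset.Icc 1 n).powersetCard 2, ∏ x ∈ A, (x : ℚ)
    = n * (n + 1) * (n - 1) * (3 * n + 2) / 24 := by
  induction n with
  | zero => rw [Finset.powersetCard_eq_empty.mpr (by simp)]; simp
  | succ n ih =>
    rw [icc_succ, aux_step _ _ (by simp), ih, e1]
    push_cast
    ring

lemma e3 (n : ℕ) : ∑ A ∈ (Finset.Icc 1 n).powersetCard 3, ∏ x ∈ A, (x : ℚ)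
    = n ^ 2 * (n + 1) ^ 2 * (n - 1) * (n - 2) / 48 := by
  induction n with
  | zero => rw [Finset.powersetCard_eq_empty.mpr (by simp)]; simp
  | succ n ih =>
    rw [icc_succ, aux_step _ _ (by simp), ih, e2]
    push_cast
    ring

lemma e4 (n : ℕ) : ∑ A ∈ (Finset.Icc 1 n).powersetCard 4, ∏ x ∈ A, (x : ℚ)
    = n * (n - 1) * (n - 2) * (n - 3) * (n + 1) *
        (15 * n ^ 3 + 15 * n ^ 2 - 10 * n - 8) / 5760 := by
  induction n with
  | zero => rw [Finset.powersetCard_eq_empty.mpr (by simp)]; simp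
  | succ n ih =>
    rw [icc_succ, aux_step _ _ (by simp), ih, e3]
    push_cast
    ring

/-- `s_4^n = ((n-4)!/n!) · S_4(1,…,n) = (n+1)(15n³+15n²−10n−8)/5760`. -/
theorem stmt_5 (n : ℕ) (hn : 4 ≤ n) :
    ((Nat.factorial (n - 4) : ℚ) / (Nat.factorial n : ℚ)) *
        ∑ A ∈ (Finset.Icc 1 n).powersetCard 4, ∏ x ∈ A, (x : ℚ)
      = ((n : ℚ) + 1) * (15 * (n : ℚ) ^ 3 + 15 * (n : ℚ) ^ 2 - 10 * (n : ℚ) - 8) / 5760 := by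
  obtain ⟨m, rfl⟩ : ∃ m, n = m + 4 := ⟨n - 4, by omega⟩
  rw [e4]
  have h1 : m + 4 - 4 = m := by omega
  rw [h1]
  have h2 : Nat.factorial (m + 4) = (m + 4) * (m + 3) * (m + 2) * (m + 1) * Nat.factorial m := by
    simp [Nat.factorial_succ]; ring
  rw [h2]
  have h3 : (Nat.factorial m : ℚ) ≠ 0 := Nat.cast_ne_zero.mpr (Nat.factorial_ne_zero m)
  push_cast
  field_simp
  ring
end

section
/- The formal power series u(t,x) = Σ_{n≥0} ((2n)!/n!) · t^n/(1−x)^{2n+1}, viewed for fixed x with |x| < 1 as a power series in t, has radius of convergence 0 for every t ≠ 0; i.e., for any fixed x with |x|<1 and any t ≠ 0 the series Σ_{n≥0} ((2n)!/n!)·t^n/(1−x)^{2n+1} diverges. -/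
/-! The partial sums can only converge if the terms tend to `0`. But with `q = t / (1 - x)²`
the `n`-th term is `C(2n, n) · n! · qⁿ / (1 - x)`, whose absolute value is at least
`n! |q|ⁿ / |1 - x|`, and `n! |q|ⁿ → ∞` for `q ≠ 0` because `|q|⁻ⁿ / n! → 0`. -/

open Filter Finset Topology
open scoped Nat

theorem tendsto_nhds_zero_of_tendsto_sum_range {G : Type*} [AddCommGroup G] [TopologicalSpace G]
    [IsTopologicalAddGroup G] {f : ℕ → G} {L : G}
    (h : Tendsto (fun N => ∑ n ∈ range N, f n) atTop (𝓝 L)) :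
    Tendsto f atTop (𝓝 0) := by
  simpa [sum_range_succ_sub_sum] using (h.comp (tendsto_add_atTop_nat 1)).sub h

theorem tendsto_factorial_mul_pow_atTop {K : Type*} [Field K] [LinearOrder K]
    [IsStrictOrderedRing K] [FloorSemiring K] [TopologicalSpace K] [OrderTopology K]
    {c : K} (hc : 0 < c) :
    Tendsto (fun n => (n ! : K) * c ^ n) atTop atTop := by
  have hpos : Tendsto (fun n => c⁻¹ ^ n / n !) atTop (𝓝[>] 0) :=
    tendsto_nhdsWithin_of_tendsto_nhds_of_eventually_within _
      (FloorSemiring.tendsto_pow_div_factorial_atTop c⁻¹)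
      (Eventually.of_forall fun n => by simp only [Set.mem_Ioi]; positivity)
  convert hpos.inv_tendsto_nhdsGT_zero using 1
  ext n
  simp [inv_pow, mul_comm]

theorem Nat.centralBinom_mul_factorial_mul_factorial (n : ℕ) :
    n.centralBinom * n ! * n ! = (2 * n)! := by
  simpa [Nat.centralBinom_eq_two_mul_choose, two_mul] using
    Nat.choose_mul_factorial_mul_factorial (Nat.le_add_left n n)

theorem factorial_two_mul_div_factorial_mul_div_pow {K : Type*} [Field K] [CharZero K]
    (x t : K) (hx : 1 - x ≠ 0) (n : ℕ) :
    ((2 * n)! : K) / n ! * t ^ n / (1 - x) ^ (2 * n + 1)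
      = n.centralBinom * (n ! * (t / (1 - x) ^ 2) ^ n) / (1 - x) := by
  rw [← Nat.centralBinom_mul_factorial_mul_factorial]
  have : (n ! : K) ≠ 0 := mod_cast n.factorial_ne_zero
  push_cast
  rw [div_pow, ← pow_mul, pow_succ]
  field_simp

/-- The formal power series solution `Σ ((2n)!/n!) tⁿ/(1−x)^{2n+1}` of the heat
equation with Cauchy data `1/(1−x)` diverges for every `t ≠ 0` and `|x| < 1`. -/
theorem stmt_7 (x t : ℝ) (hx : |x| < 1) (ht : t ≠ 0) :
    ¬ ∃ L : ℝ, Filter.Tendsto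
        (fun N => ∑ n ∈ Finset.range N,
          ((Nat.factorial (2 * n) : ℝ) / (Nat.factorial n : ℝ)) * t ^ n
            / (1 - x) ^ (2 * n + 1))
        Filter.atTop (nhds L) := by
  rintro ⟨L, hL⟩
  have hx1 : 1 - x ≠ 0 := by linarith [(abs_lt.mp hx).2]
  set q := t / (1 - x) ^ 2
  have hq : 0 < |q| := by positivity
  have hlower : ∀ n : ℕ, n ! * |q| ^ n / |1 - x|
      ≤ |((2 * n)! : ℝ) / n ! * t ^ n / (1 - x) ^ (2 * n + 1)| := by
    intro n
    rw [factorial_two_mul_div_factorial_mul_div_pow x t hx1, abs_div _ (1 - x), abs_mul, abs_mul,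
      abs_pow, Nat.abs_cast, Nat.abs_cast]
    gcongr ?_ / _
    exact le_mul_of_one_le_left (by positivity) (mod_cast n.centralBinom_pos)
  have htop := (tendsto_factorial_mul_pow_atTop hq).atTop_div_const (abs_pos.2 hx1)
  have hzero := (tendsto_nhds_zero_of_tendsto_sum_range hL).abs
  rw [abs_zero] at hzero
  exact not_tendsto_atTop_of_tendsto_nhds hzero (tendsto_atTop_mono hlower htop)
end
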